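/- arXiv:1201.0147 — 4 statements merged into one kernel-verified Lean document; each statement's English description precedes it below -/
import Mathlib

section
/- Let b > 0 and c > 0 be real numbers, and let ρ : [0,b] → ℝ be twice differentiable with ρ(s) ≥ 0 for all s ∈ [0,b], ρ(0) = 0, ρ'(0) = 0, and ρ''(s) ≤ c (ρ(s) + |ρ'(s)|) for all s ∈ [0,b]. Then ρ(s) = 0 for every s ∈ [0,b]. -/
/-!
Apply Grönwall's inequality to the energy `E = ρ² + (ρ'⁺)²`, which vanishes at `0`. Where
`ρ' > 0` the differential inequality gives `E' ≤ (3c + 1) E`; where `ρ' ≤ 0` the second term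
is flat to first order and `E' = 2 ρ ρ' ≤ 0` because `ρ ≥ 0`. Hence `E ≡ 0`, so `ρ ≡ 0`.
-/

open Set Filter Topology Asymptotics

theorem hasDerivAt_max_zero_sq (x : ℝ) :
    HasDerivAt (fun y : ℝ => max y 0 ^ 2) (2 * max x 0) x := by
  rcases lt_trichotomy x 0 with hx | rfl | hx
  · have hloc : (fun y : ℝ => max y 0 ^ 2) =ᶠ[𝓝 x] fun _ => 0 := by
      filter_upwards [Iio_mem_nhds hx] with y hy
      simp [max_eq_right (show y < 0 from hy).le]
    simpa [max_eq_right hx.le] using (hasDerivAt_const x (0 : ℝ)).congr_of_eventuallyEq hloc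
  · rw [hasDerivAt_iff_isLittleO_nhds_zero]
    simp only [zero_add, max_self, ne_eq, OfNat.ofNat_ne_zero, not_false_eq_true, zero_pow,
      sub_zero, mul_zero, smul_zero]
    refine IsBigO.trans_isLittleO (IsBigO.of_bound 1 (Eventually.of_forall fun h => ?_))
      (isLittleO_pow_id one_lt_two)
    rcases le_total h 0 with hh | hh <;> simp [hh, sq_nonneg]
  · have hloc : (fun y : ℝ => max y 0 ^ 2) =ᶠ[𝓝 x] fun y => y ^ 2 := by
      filter_upwards [Ioi_mem_nhds hx] with y hy
      rw [max_eq_left (show 0 < y from hy).le]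
    simpa [max_eq_left hx.le] using (hasDerivAt_pow 2 x).congr_of_eventuallyEq hloc

theorem nonpos_of_hasDerivWithinAt_le_mul_self {f f' : ℝ → ℝ} {K a b : ℝ}
    (hf : ∀ x ∈ Icc a b, HasDerivWithinAt f (f' x) (Icc a b) x) (ha : f a ≤ 0)
    (bound : ∀ x ∈ Ico a b, f' x ≤ K * f x) :
    ∀ x ∈ Icc a b, f x ≤ 0 := by
  intro x hx
  have hright : ∀ x ∈ Ico a b, HasDerivWithinAt f (f' x) (Ici x) x := fun x hx =>
    (hf x (Ico_subset_Icc_self hx)).mono_of_mem_nhdsWithin (Icc_mem_nhdsGE_of_mem hx)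
  calc f x ≤ gronwallBound 0 K 0 (x - a) :=
        le_gronwallBound_of_liminf_deriv_right_le (fun x hx => (hf x hx).continuousWithinAt)
          (fun x hx _ hr => by
            simpa [slope_def_field, div_eq_inv_mul] using (hright x hx).liminf_right_slope_le hr)
          ha (by simpa using bound) x hx
    _ = 0 := gronwallBound_ε0_δ0 K _

theorem energy_deriv_le {c r r' r'' : ℝ} (hc : 0 ≤ c) (hr : 0 ≤ r)
    (hr'' : r'' ≤ c * (r + |r'|)) :
    2 * r * r' + 2 * max r' 0 * r'' ≤ (3 * c + 1) * (r ^ 2 + max r' 0 ^ 2) := by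
  rcases le_total r' 0 with h | h
  · rw [max_eq_right h]
    nlinarith
  · rw [max_eq_left h, abs_of_nonneg h] at *
    nlinarith [mul_le_mul_of_nonneg_left hr'' (by positivity : 0 ≤ 2 * r'), sq_nonneg (r - r')]

theorem stmt_0_general (b c : ℝ) (hc : 0 < c)
    (ρ ρ' ρ'' : ℝ → ℝ)
    (hρ' : ∀ s ∈ Icc (0 : ℝ) b, HasDerivWithinAt ρ (ρ' s) (Icc (0 : ℝ) b) s)
    (hρ'' : ∀ s ∈ Icc (0 : ℝ) b, HasDerivWithinAt ρ' (ρ'' s) (Icc (0 : ℝ) b) s)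
    (hnonneg : ∀ s ∈ Icc (0 : ℝ) b, 0 ≤ ρ s)
    (h0 : ρ 0 = 0) (h0' : ρ' 0 = 0)
    (hineq : ∀ s ∈ Icc (0 : ℝ) b, ρ'' s ≤ c * (ρ s + |ρ' s|)) :
    ∀ s ∈ Icc (0 : ℝ) b, ρ s = 0 := by
  have hE : ∀ s ∈ Icc 0 b, HasDerivWithinAt (fun s => ρ s ^ 2 + max (ρ' s) 0 ^ 2)
      (2 * ρ s * ρ' s + 2 * max (ρ' s) 0 * ρ'' s) (Icc 0 b) s := fun s hs =>
    (((hρ' s hs).fun_pow 2).fun_add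
      ((hasDerivAt_max_zero_sq (ρ' s)).comp_hasDerivWithinAt s (hρ'' s hs))).congr_deriv
        (by norm_num)
  have hE_nonpos := nonpos_of_hasDerivWithinAt_le_mul_self hE (by simp [h0, h0'])
    fun s hs => energy_deriv_le hc.le (hnonneg s (Ico_subset_Icc_self hs))
      (hineq s (Ico_subset_Icc_self hs))
  intro s hs
  nlinarith [hE_nonpos s hs, sq_nonneg (max (ρ' s) 0)]

/-- **Gronwall-type differential-inequality lemma** ([BaCaGS11, Lemma 3.1]):
if `ρ : [0,b] → ℝ` is twice differentiable, nonnegative, with `ρ 0 = 0`, `ρ' 0 = 0`,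
and `ρ'' s ≤ c * (ρ s + |ρ' s|)` on `[0,b]`, then `ρ ≡ 0` on `[0,b]`. -/
theorem stmt_0 (b c : ℝ) (hb : 0 < b) (hc : 0 < c)
    (ρ ρ' ρ'' : ℝ → ℝ)
    (hρ' : ∀ s ∈ Icc (0 : ℝ) b, HasDerivWithinAt ρ (ρ' s) (Icc (0 : ℝ) b) s)
    (hρ'' : ∀ s ∈ Icc (0 : ℝ) b, HasDerivWithinAt ρ' (ρ'' s) (Icc (0 : ℝ) b) s)
    (hnonneg : ∀ s ∈ Icc (0 : ℝ) b, 0 ≤ ρ s)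
    (h0 : ρ 0 = 0) (h0' : ρ' 0 = 0)
    (hineq : ∀ s ∈ Icc (0 : ℝ) b, ρ'' s ≤ c * (ρ s + |ρ' s|)) :
    ∀ s ∈ Icc (0 : ℝ) b, ρ s = 0 :=
  stmt_0_general b c hc ρ ρ' ρ'' hρ' hρ'' hnonneg h0 h0' hineq
end

section
/- Let U ⊆ ℝ^m be open and, for each l,i,j ∈ {1,…,m}, let Γ^l_{ij} : U → ℝ be locally Lipschitz functions with Γ^l_{ij} = Γ^l_{ji}. Assume that for every p ∈ U with p^m = 0 and every v ∈ ℝ^m with v^m = 0 one has Σ_{i,j} Γ^m_{ij}(p) v^i v^j ≥ 0. Let γ : [0,b] → U be a C² curve satisfying the geodesic equation γ̈^l(s) = −Σ_{i,j} Γ^l_{ij}(γ(s)) γ̇^i(s) γ̇^j(s) for all l and all s ∈ [0,b], with γ^m(0) = 0, γ̇^m(0) = 0, γ^m(s) ≥ 0 for all s ∈ [0,b], and such that the projected point (γ^1(s),…,γ^{m−1}(s),0) belongs to U for all s ∈ [0,b]. Then γ^m(s) = 0 for every s ∈ [0,b]. -/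
/-! Put `F = x^m ∘ γ ≥ 0`. Near a time `T` where `γ` meets `H`, compare `Γ^m` at `γ(s)` with its
value at the projection of `γ(s)` to `H`, where convexity applies to the projected velocity: the
local Lipschitz bound turns the geodesic equation into `F'' ≤ C (F + |F'|)`. If moreover
`F(T) = F'(T) = 0`, then `F ≡ 0` on a short interval `[T, T + h]`: with `M = max F` there, a
barrier argument gives `F' ≤ M (e^{(C+1)h} - 1)`, hence `M ≤ h (e^{(C+1)h} - 1) M`, which forces
`M = 0` for small `h`. Continuous induction along `[0, b]` finishes the proof. -/

open Set Filter Topology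

section QuadraticForm

variable {ι : Type*} [Fintype ι]

def quadForm (B : ι → ι → ℝ) (u : ι → ℝ) : ℝ := ∑ i, ∑ j, B i j * u i * u j

lemma abs_sum_sum_mul_le {B c β : ι → ι → ℝ} {δ : ℝ}
    (hB : ∀ i j, |B i j| ≤ β i j) (hc : ∀ i j, |c i j| ≤ δ) :
    |∑ i, ∑ j, B i j * c i j| ≤ (∑ i, ∑ j, β i j) * δ :=
  calc |∑ i, ∑ j, B i j * c i j| ≤ ∑ i, ∑ j, |B i j * c i j| :=
        (Finset.abs_sum_le_sum_abs _ _).trans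
          (Finset.sum_le_sum fun i _ => Finset.abs_sum_le_sum_abs _ _)
    _ ≤ ∑ i, ∑ j, β i j * δ := by
        gcongr with i _ j _
        rw [abs_mul]
        exact mul_le_mul (hB i j) (hc i j) (abs_nonneg _) ((abs_nonneg _).trans (hB i j))
    _ = (∑ i, ∑ j, β i j) * δ := by simp only [Finset.sum_mul]

lemma abs_apply_le_norm (u : ι → ℝ) (i : ι) : |u i| ≤ ‖u‖ := norm_le_pi_norm u i

variable [DecidableEq ι]

lemma dist_update_zero_le (p : ι → ℝ) (e : ι) : dist p (Function.update p e 0) ≤ |p e| := by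
  refine (dist_pi_le_iff (abs_nonneg _)).2 fun i => ?_
  rcases eq_or_ne i e with rfl | hi
  · simp
  · simp [hi]

lemma abs_mul_sub_update_mul_le (u : ι → ℝ) (e i j : ι) :
    |u i * u j - Function.update u e 0 i * Function.update u e 0 j| ≤ ‖u‖ * |u e| := by
  rcases eq_or_ne i e with rfl | hi
  · rw [Function.update_self, zero_mul, sub_zero, abs_mul, mul_comm]
    exact mul_le_mul_of_nonneg_right (abs_apply_le_norm u j) (abs_nonneg _)
  rcases eq_or_ne j e with rfl | hj
  · rw [Function.update_self, mul_zero, sub_zero, abs_mul]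
    exact mul_le_mul_of_nonneg_right (abs_apply_le_norm u i) (abs_nonneg _)
  · rw [Function.update_of_ne hi, Function.update_of_ne hj, sub_self, abs_zero]
    positivity

lemma neg_quadForm_le {B B' K A : ι → ι → ℝ} {d : ℝ} {u : ι → ℝ} {e : ι}
    (hconv : 0 ≤ quadForm B' (Function.update u e 0))
    (hlip : ∀ i j, |B i j - B' i j| ≤ K i j * d) (hA : ∀ i j, |B' i j| ≤ A i j) :
    -quadForm B u ≤
      (∑ i, ∑ j, K i j) * d * ‖u‖ ^ 2 + (∑ i, ∑ j, A i j) * (‖u‖ * |u e|) := by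
  set w := Function.update u e 0
  have hsplit : quadForm B u = quadForm B' w + ∑ i, ∑ j, B' i j * (u i * u j - w i * w j)
      + ∑ i, ∑ j, (B i j - B' i j) * (u i * u j) := by
    simp only [quadForm, ← Finset.sum_add_distrib]
    exact Finset.sum_congr rfl fun i _ => Finset.sum_congr rfl fun j _ => by ring
  have hw := abs_sum_sum_mul_le hA (abs_mul_sub_update_mul_le u e)
  have huu : ∀ i j, |u i * u j| ≤ ‖u‖ ^ 2 := fun i j => by
    rw [abs_mul, sq]
    exact mul_le_mul (abs_apply_le_norm u i) (abs_apply_le_norm u j) (abs_nonneg _) (norm_nonneg _)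
  have hB := abs_sum_sum_mul_le hlip huu
  simp only [← Finset.sum_mul] at hB
  rw [hsplit]
  linarith [(abs_le.1 hw).1, (abs_le.1 hB).1]

lemma exists_eventually_neg_quadForm_le {U : Set (ι → ℝ)} (hU : IsOpen U)
    {G : (ι → ℝ) → ι → ι → ℝ} (hG : ∀ i j, LocallyLipschitzOn U fun p => G p i j) {e : ι}
    (hconv : ∀ q ∈ U, q e = 0 → ∀ w : ι → ℝ, w e = 0 → 0 ≤ quadForm (G q) w)
    {x : ι → ℝ} (hx : x ∈ U) (hxe : x e = 0) (V : ℝ) :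
    ∃ C, ∀ᶠ p in 𝓝 x, ∀ u : ι → ℝ, ‖u‖ ≤ V →
      -quadForm (G p) u ≤ C * (|p e| + |u e|) := by
  have hproj : Tendsto (fun p => Function.update p e 0) (𝓝 x) (𝓝 x) :=
    (continuous_id.update e continuous_const).tendsto' x x
      (by rw [← hxe]; exact Function.update_eq_self e x)
  choose K N hN hLip using fun i j => hG i j hx
  rw [hU.nhdsWithin_eq hx] at hN
  set A : ι → ι → ℝ := fun i j => |G x i j| + 1
  have hA : ∀ i j, ∀ᶠ p in 𝓝 x, |G (Function.update p e 0) i j| ≤ A i j := fun i j =>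
    Tendsto.eventually_le_const (lt_add_one _)
      (((hG i j).continuousOn.continuousAt (hU.mem_nhds hx)).tendsto.comp hproj).abs
  have hnear : ∀ᶠ p in 𝓝 x, Function.update p e 0 ∈ U ∧ ∀ i j, p ∈ N i j ∧
      Function.update p e 0 ∈ N i j ∧ |G (Function.update p e 0) i j| ≤ A i j :=
    (hproj.eventually_mem (hU.mem_nhds hx)).and <| eventually_all.2 fun i =>
      eventually_all.2 fun j =>
        Eventually.and (hN i j) ((hproj.eventually_mem (hN i j)).and (hA i j))
  have hK : 0 ≤ ∑ i, ∑ j, (K i j : ℝ) := by positivity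
  have hA0 : 0 ≤ ∑ i, ∑ j, A i j := by positivity
  refine ⟨(∑ i, ∑ j, (K i j : ℝ)) * V ^ 2 + (∑ i, ∑ j, A i j) * V, ?_⟩
  filter_upwards [hnear] with p ⟨hqU, hpq⟩ u hu
  have hV : 0 ≤ V := (norm_nonneg u).trans hu
  have hlip : ∀ i j, |G p i j - G (Function.update p e 0) i j| ≤ K i j * |p e| := fun i j =>
    ((hLip i j).dist_le_mul _ (hpq i j).1 _ (hpq i j).2.1).trans
      (mul_le_mul_of_nonneg_left (dist_update_zero_le p e) (K i j).2)
  have hw := hconv _ hqU (Function.update_self ..) (Function.update u e 0)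
    (Function.update_self ..)
  have hquad := neg_quadForm_le hw hlip fun i j => (hpq i j).2.2
  calc -quadForm (G p) u
      ≤ (∑ i, ∑ j, (K i j : ℝ)) * |p e| * V ^ 2 + (∑ i, ∑ j, A i j) * (V * |u e|) := by
        refine hquad.trans ?_
        gcongr
    _ ≤ _ := by
        nlinarith [mul_nonneg (mul_nonneg hK (sq_nonneg V)) (abs_nonneg (u e)),
          mul_nonneg (mul_nonneg hA0 hV) (abs_nonneg (p e))]

end QuadraticForm

section SecondOrderInequality

variable {F F' F'' : ℝ → ℝ} {a b C : ℝ}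

lemma deriv_le_of_second_deriv_le {M : ℝ} (hC : 0 ≤ C) (hM : 0 ≤ M)
    (hF' : ∀ x ∈ Icc a b, HasDerivWithinAt F' (F'' x) (Icc a b) x)
    (hFM : ∀ x ∈ Icc a b, F x ≤ M) (ha : F' a ≤ 0)
    (hF'' : ∀ x ∈ Icc a b, F'' x ≤ C * (F x + |F' x|)) :
    ∀ x ∈ Icc a b, F' x ≤ M * (Real.exp ((C + 1) * (x - a)) - 1) := by
  intro x hx
  -- `F'` never reaches the barrier `(M + ε) e^{(C + 1)(y - a)} - M`: the extra `+ 1` makes its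
  -- slope strictly exceed `C (M + barrier)`, the bound on `F''` at a contact point.
  have hbarrier : ∀ ε > 0, F' x ≤ (M + ε) * Real.exp ((C + 1) * (x - a)) - M := by
    intro ε hε
    have hB : ∀ y, HasDerivAt (fun y => (M + ε) * Real.exp ((C + 1) * (y - a)) - M)
        ((C + 1) * ((M + ε) * Real.exp ((C + 1) * (y - a)))) y := fun y =>
      (((((hasDerivAt_id' y).sub_const a).const_mul (C + 1)).exp.const_mul (M + ε)).sub_const
        M).congr_deriv (by ring)
    refine image_le_of_deriv_right_lt_deriv_boundary (fun y hy => (hF' y hy).continuousWithinAt)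
      (fun y hy => (hF' y (Ico_subset_Icc_self hy)).mono_of_mem_nhdsWithin
        (Icc_mem_nhdsGE_of_mem hy)) ?_ hB ?_ hx
    · simp only [sub_self, mul_zero, Real.exp_zero, mul_one]
      linarith
    · intro y hy hyB
      have hexp : 1 ≤ Real.exp ((C + 1) * (y - a)) := Real.one_le_exp (by nlinarith [hy.1])
      have hpos : 0 < F' y := by rw [hyB]; nlinarith
      have h1 := hF'' y (Ico_subset_Icc_self hy)
      rw [abs_of_pos hpos] at h1
      nlinarith [hFM y (Ico_subset_Icc_self hy)]
  set E := Real.exp ((C + 1) * (x - a))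
  have hE : 0 < E := Real.exp_pos _
  refine le_of_forall_pos_le_add fun δ hδ => (hbarrier (δ / E) (by positivity)).trans_eq ?_
  field_simp
  ring

lemma eqOn_zero_of_second_deriv_le_of_small
    (hF : ∀ x ∈ Icc a b, HasDerivWithinAt F (F' x) (Icc a b) x)
    (hF' : ∀ x ∈ Icc a b, HasDerivWithinAt F' (F'' x) (Icc a b) x)
    (hC : 0 ≤ C) (hnonneg : ∀ x ∈ Icc a b, 0 ≤ F x) (ha : F a = 0) (ha' : F' a ≤ 0)
    (hF'' : ∀ x ∈ Icc a b, F'' x ≤ C * (F x + |F' x|))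
    (hsmall : (b - a) * (Real.exp ((C + 1) * (b - a)) - 1) < 1) :
    EqOn F 0 (Icc a b) := by
  intro x hx
  show F x = 0
  obtain ⟨y, hy, hmax⟩ := isCompact_Icc.exists_isMaxOn ⟨x, hx⟩
    (fun z hz => (hF z hz).continuousWithinAt)
  set E := Real.exp ((C + 1) * (b - a)) - 1
  have hab : a ≤ b := hx.1.trans hx.2
  have hE : 0 ≤ E := sub_nonneg.2 (Real.one_le_exp (by nlinarith))
  have hM : 0 ≤ F y := hnonneg y hy
  have hderiv : ∀ z ∈ Icc a b, F' z ≤ F y * E := fun z hz =>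
    (deriv_le_of_second_deriv_le hC hM hF' (fun w hw => hmax hw) ha' hF'' z hz).trans
      (by simp only [E]; gcongr; exact hz.2)
  have hval : ∀ z ∈ Icc a b, F z ≤ (z - a) * (F y * E) :=
    image_le_of_deriv_right_le_deriv_boundary (fun z hz => (hF z hz).continuousWithinAt)
      (fun z hz => (hF z (Ico_subset_Icc_self hz)).mono_of_mem_nhdsWithin
        (Icc_mem_nhdsGE_of_mem hz)) (by simp [ha]) (by fun_prop)
      (fun z _ => by simpa using ((hasDerivWithinAt_id z _).sub_const a).mul_const (F y * E))
      (fun z hz => hderiv z (Ico_subset_Icc_self hz))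
  have hMy : F y ≤ (b - a) * E * F y := by
    nlinarith [hval y hy, hy.2, mul_nonneg hM hE]
  have : F y ≤ 0 := by nlinarith
  exact le_antisymm (by linarith [show F x ≤ F y from hmax hx]) (hnonneg x hx)

lemma eqOn_zero_of_second_deriv_le
    (hF : ∀ x ∈ Icc a b, HasDerivWithinAt F (F' x) (Icc a b) x)
    (hF' : ∀ x ∈ Icc a b, HasDerivWithinAt F' (F'' x) (Icc a b) x)
    (hnonneg : ∀ x ∈ Icc a b, 0 ≤ F x) (ha : F a = 0) (ha' : F' a ≤ 0)
    (hloc : ∀ T ∈ Ico a b, F T = 0 →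
      ∃ C, ∀ᶠ x in 𝓝[Icc a b] T, F'' x ≤ C * (F x + |F' x|)) :
    EqOn F 0 (Icc a b) := by
  have hclosed : IsClosed (F ⁻¹' {0} ∩ Icc a b) := by
    rw [inter_comm]
    exact ContinuousOn.preimage_isClosed_of_isClosed (fun x hx => (hF x hx).continuousWithinAt)
      isClosed_Icc isClosed_singleton
  refine fun x hx => hclosed.Icc_subset_of_forall_exists_gt ha ?_ hx
  rintro T ⟨hT0, hT⟩ y hy
  have hT0 : F T = 0 := hT0
  have hT' : F' T ≤ 0 := by
    rcases hT.1.eq_or_lt with rfl | haT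
    · exact ha'
    · have hmin : IsLocalMin F T := by
        filter_upwards [Icc_mem_nhds haT hT.2] with z hz
        rw [hT0]
        exact hnonneg z hz
      exact (hmin.hasDerivAt_eq_zero ((hF T (Ico_subset_Icc_self hT)).hasDerivAt
        (Icc_mem_nhds haT hT.2))).le
  obtain ⟨C, hC⟩ := hloc T hT hT0
  set C' := max C 0
  have hsmall : ∀ᶠ t in 𝓝 T, (t - T) * (Real.exp ((C' + 1) * (t - T)) - 1) < 1 :=
    ContinuousAt.eventually_lt (by fun_prop) continuousAt_const (by simp)
  have hev : ∀ᶠ t in 𝓝[≥] T, (F'' t ≤ C * (F t + |F' t|) ∧ t ∈ Icc a b) ∧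
      (t - T) * (Real.exp ((C' + 1) * (t - T)) - 1) < 1 :=
    ((hC.and self_mem_nhdsWithin).filter_mono
      (nhdsWithin_le_of_mem (Icc_mem_nhdsGE_of_mem hT))).and
        (eventually_nhdsWithin_of_eventually_nhds hsmall)
  obtain ⟨t, hTt, hsub⟩ := mem_nhdsGE_iff_exists_Icc_subset.1 hev
  have hsub' : Icc T t ⊆ Icc a b := fun z hz => (hsub hz).1.2
  have hzero : EqOn F 0 (Icc T t) :=
    eqOn_zero_of_second_deriv_le_of_small (fun z hz => (hF z (hsub' hz)).mono hsub')
      (fun z hz => (hF' z (hsub' hz)).mono hsub') (le_max_right _ _)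
      (fun z hz => hnonneg z (hsub' hz)) hT0 hT'
      (fun z hz => (hsub hz).1.1.trans (mul_le_mul_of_nonneg_right (le_max_left _ _)
        (add_nonneg (hnonneg z (hsub' hz)) (abs_nonneg _))))
      (hsub ⟨hTt.le, le_rfl⟩).2
  exact ⟨min t y, hzero ⟨le_min hTt.le hy.le, min_le_left _ _⟩, lt_min hTt hy, min_le_right _ _⟩

end SecondOrderInequality

/-- **Coordinate form of Lemma 3.2**: in a chart adapted to the hypersurface
`H = {x^m = 0}`, with locally Lipschitz symmetric Christoffel symbols `Γ` that
satisfy the infinitesimal-convexity condition `∑ Γ^m_{ij}(p) v^i v^j ≥ 0` for all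
`p ∈ U ∩ H` and all `v` tangent to `H`, a geodesic starting on `H`, tangent to `H`,
and remaining on the side `{x^m ≥ 0}` (and whose projection to `H` stays in `U`)
lies entirely in `H`. -/
theorem stmt_1 (m : ℕ) (hm : 0 < m) (U : Set (Fin m → ℝ)) (hU : IsOpen U)
    (Γ : Fin m → Fin m → Fin m → (Fin m → ℝ) → ℝ)
    (hΓlip : ∀ l i j, LocallyLipschitzOn U (Γ l i j))
    (hconv : ∀ p ∈ U, p ⟨m - 1, by omega⟩ = 0 →
      ∀ v : Fin m → ℝ, v ⟨m - 1, by omega⟩ = 0 →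
        0 ≤ ∑ i, ∑ j, Γ ⟨m - 1, by omega⟩ i j p * v i * v j)
    (b : ℝ) (γ γ' γ'' : ℝ → Fin m → ℝ)
    (hγU : ∀ s ∈ Icc (0 : ℝ) b, γ s ∈ U)
    (hγ' : ∀ s ∈ Icc (0 : ℝ) b, HasDerivWithinAt γ (γ' s) (Icc (0 : ℝ) b) s)
    (hγ'' : ∀ s ∈ Icc (0 : ℝ) b, HasDerivWithinAt γ' (γ'' s) (Icc (0 : ℝ) b) s)
    (hgeo : ∀ s ∈ Icc (0 : ℝ) b, ∀ l,
      γ'' s l = -∑ i, ∑ j, Γ l i j (γ s) * γ' s i * γ' s j)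
    (hinit : γ 0 ⟨m - 1, by omega⟩ = 0)
    (hinit' : γ' 0 ⟨m - 1, by omega⟩ = 0)
    (hside : ∀ s ∈ Icc (0 : ℝ) b, 0 ≤ γ s ⟨m - 1, by omega⟩) :
    ∀ s ∈ Icc (0 : ℝ) b, γ s ⟨m - 1, by omega⟩ = 0 := by
  set e : Fin m := ⟨m - 1, by omega⟩
  refine eqOn_zero_of_second_deriv_le (F' := fun s => γ' s e) (F'' := fun s => γ'' s e)
    (fun s hs => hasDerivWithinAt_pi.1 (hγ' s hs) e)
    (fun s hs => hasDerivWithinAt_pi.1 (hγ'' s hs) e) hside hinit hinit'.le ?_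
  intro T hT hTe
  have hTI : T ∈ Icc 0 b := Ico_subset_Icc_self hT
  obtain ⟨C, hC⟩ := exists_eventually_neg_quadForm_le (G := fun p i j => Γ e i j p) hU
    (fun i j => hΓlip e i j) hconv (hγU T hTI) hTe (‖γ' T‖ + 1)
  refine ⟨C, ?_⟩
  have hV : ∀ᶠ s in 𝓝[Icc 0 b] T, ‖γ' s‖ ≤ ‖γ' T‖ + 1 :=
    Tendsto.eventually_le_const (lt_add_one _) (hγ'' T hTI).continuousWithinAt.norm
  filter_upwards [(hγ' T hTI).continuousWithinAt.eventually hC, hV, self_mem_nhdsWithin]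
    with s hCs hVs hs
  rw [hgeo s hs e, ← abs_of_nonneg (hside s hs)]
  exact hCs (γ' s) hVs
end

section
/- Let Ũ ⊆ ℝ^m be open and convex and φ : Ũ → ℝ be C² with locally Lipschitz second derivative; assume 0 is a regular value of φ, set H = φ⁻¹(0) and Ω = {x ∈ Ũ : φ(x) > 0}, and assume that for every p ∈ H and every v ∈ ℝ^m with dφ_p(v) = 0 one has D²φ_p(v,v) ≤ 0. Then for any two points p, q ∈ Ω, if the straight segment from p to q is contained in Ω ∪ H, then it is in fact contained in Ω. -/
/-!
Suppose the segment meets `H = {φ = 0}` and let `t₀` be the last parameter where it does.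
Since `φ ≥ 0` along the segment, `t₀` is an interior minimum of `g t = φ (p + t • (q - p))`, so
the segment is tangent to `H` at `x₀ = p + t₀ • (q - p)`. Near `x₀`, every point `x` with
`φ x ≥ 0` can be pushed onto `H` along a fixed transversal direction, reaching a point `y` at
distance `O(φ x)`. Infinitesimal convexity at `y`, applied to the tangential part of `v = q - p`,
bounds `D²φ_y(v, v)` by `O(|dφ_y v|)`, and the Lipschitz bounds on `dφ` and `D²φ` carry this back
to `x`. Along the segment this reads `g'' ≤ C (g + |g'|)`; together with `g t₀ = g' t₀ = 0` and
`g ≥ 0`, a Gronwall argument for `g' + (C + 1) g` forces `g = 0` just after `t₀`,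
contradicting the choice of `t₀`.
-/

open Set Filter Topology

theorem nonpos_of_hasDerivWithinAt_le_mul_of_pos {f f' : ℝ → ℝ} {a b K : ℝ}
    (hf : ContinuousOn f (Icc a b)) (hf' : ∀ x ∈ Ico a b, HasDerivWithinAt f (f' x) (Ici x) x)
    (ha : f a ≤ 0) (hK : ∀ x ∈ Ico a b, 0 < f x → f' x ≤ K * f x) :
    ∀ x ∈ Icc a b, f x ≤ 0 := by
  -- the barriers `ε * exp ((K + 1) * (x - a))` outrun `f` wherever they touch it
  have hbarrier : ∀ ε > 0, ∀ x ∈ Icc a b, f x ≤ ε * Real.exp ((K + 1) * (x - a)) := by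
    intro ε hε
    refine image_le_of_deriv_right_lt_deriv_boundary hf hf' (by simpa using ha.trans hε.le)
      (B' := fun x => ε * (Real.exp ((K + 1) * (x - a)) * (K + 1))) (fun x => ?_) fun x hx hfx => ?_
    · simpa using ((((hasDerivAt_id x).sub_const a).const_mul (K + 1)).exp).const_mul ε
    · have hB : 0 < ε * Real.exp ((K + 1) * (x - a)) := by positivity
      have := hK x hx (hfx ▸ hB)
      rw [hfx] at this
      linarith
  intro x hx
  by_contra! hpos
  have := hbarrier (f x / (2 * Real.exp ((K + 1) * (x - a)))) (by positivity) x hx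
  rw [div_mul_eq_mul_div, mul_div_mul_comm, div_self (Real.exp_pos _).ne'] at this
  linarith

theorem eqOn_zero_of_second_deriv_le_s5 {u u' u'' : ℝ → ℝ} {a b C : ℝ}
    (hu : ∀ s ∈ Icc a b, HasDerivAt u (u' s) s) (hu' : ∀ s ∈ Icc a b, HasDerivAt u' (u'' s) s)
    (hnn : ∀ s ∈ Icc a b, 0 ≤ u s) (h0 : u a = 0) (h0' : u' a = 0)
    (hineq : ∀ s ∈ Icc a b, u'' s ≤ C * (u s + |u' s|)) :
    ∀ s ∈ Icc a b, u s = 0 := by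
  set D := max C 0
  have hD : 0 ≤ D := le_max_right _ _
  have hineq' : ∀ s ∈ Icc a b, u'' s ≤ D * (u s + |u' s|) := fun s hs =>
    (hineq s hs).trans (mul_le_mul_of_nonneg_right (le_max_left _ _)
      (add_nonneg (hnn s hs) (abs_nonneg _)))
  -- `w = u' + (D + 1) u` satisfies `w' ≤ (2 D + 1) w` wherever `w > 0`
  have hw : ∀ s ∈ Icc a b, u' s + (D + 1) * u s ≤ 0 := by
    refine nonpos_of_hasDerivWithinAt_le_mul_of_pos (K := 2 * D + 1)
      (f' := fun s => u'' s + (D + 1) * u' s)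
      (fun s hs => ((hu' s hs).add ((hu s hs).const_mul _)).continuousAt.continuousWithinAt)
      (fun s hs => ((hu' s (Ico_subset_Icc_self hs)).add
        ((hu s (Ico_subset_Icc_self hs)).const_mul _)).hasDerivWithinAt)
      (by simp [h0, h0']) fun s hs hpos => ?_
    have hs' := Ico_subset_Icc_self hs
    have h1 := hineq' s hs'
    have h2 := hnn s hs'
    rcases le_or_gt 0 (u' s) with h3 | h3
    · rw [abs_of_nonneg h3] at h1
      nlinarith [mul_nonneg hD h2, mul_nonneg hD h3]
    · rw [abs_of_neg h3] at h1
      nlinarith [mul_nonneg hD h2, mul_nonneg hD hpos.le]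
  have hu_nonpos : ∀ s ∈ Icc a b, u s ≤ 0 :=
    nonpos_of_hasDerivWithinAt_le_mul_of_pos (K := -(D + 1))
      (fun s hs => (hu s hs).continuousAt.continuousWithinAt)
      (fun s hs => (hu s (Ico_subset_Icc_self hs)).hasDerivWithinAt) h0.le
      fun s hs _ => by linarith [hw s (Ico_subset_Icc_self hs)]
  exact fun s hs => le_antisymm (hu_nonpos s hs) (hnn s hs)

theorem eventually_eq_zero_of_second_deriv_le {g g' g'' : ℝ → ℝ} {t₀ C : ℝ}
    (hg : ∀ᶠ t in 𝓝[≥] t₀, HasDerivAt g (g' t) t)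
    (hg' : ∀ᶠ t in 𝓝[≥] t₀, HasDerivAt g' (g'' t) t) (hnn : ∀ᶠ t in 𝓝[≥] t₀, 0 ≤ g t)
    (h0 : g t₀ = 0) (h0' : g' t₀ = 0) (hineq : ∀ᶠ t in 𝓝[≥] t₀, g'' t ≤ C * (g t + |g' t|)) :
    ∀ᶠ t in 𝓝[≥] t₀, g t = 0 := by
  obtain ⟨b, hb, hsub⟩ := mem_nhdsGE_iff_exists_Icc_subset.1 (hg.and (hg'.and (hnn.and hineq)))
  filter_upwards [Icc_mem_nhdsGE hb] with t ht
  exact eqOn_zero_of_second_deriv_le_s5 (fun s hs => (hsub hs).1) (fun s hs => (hsub hs).2.1)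
    (fun s hs => (hsub hs).2.2.1) h0 h0' (fun s hs => (hsub hs).2.2.2) t ht

theorem ne_zero_of_frequently_eq_zero_nhdsGT {g : ℝ → ℝ} {a b : ℝ}
    (hg : ContinuousOn g (Icc a b)) (ha : g a ≠ 0) (hb : g b ≠ 0)
    (hzero : ∀ t ∈ Ioo a b, g t = 0 → ∃ᶠ s in 𝓝[>] t, g s = 0) :
    ∀ t ∈ Icc a b, g t ≠ 0 := by
  intro t ht hgt
  set Z := Icc a b ∩ g ⁻¹' {0}
  have hZ : IsClosed Z := hg.preimage_isClosed_of_isClosed isClosed_Icc isClosed_singleton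
  have hbdd : BddAbove Z := ⟨b, fun s hs => hs.1.2⟩
  -- the last zero of `g` would be followed by further zeros
  have hlast : sSup Z ∈ Z := hZ.csSup_mem ⟨t, ht, hgt⟩ hbdd
  have hlast_lt : sSup Z < b := hlast.1.2.lt_of_ne fun h => hb (h ▸ hlast.2)
  have hlast_gt : a < sSup Z := hlast.1.1.lt_of_ne fun h => ha (h ▸ hlast.2)
  obtain ⟨s, hs0, hs⟩ :=
    ((hzero _ ⟨hlast_gt, hlast_lt⟩ hlast.2).and_eventually (Ioo_mem_nhdsGT hlast_lt)).exists
  exact (le_csSup hbdd ⟨⟨hlast.1.1.trans hs.1.le, hs.2.le⟩, hs0⟩).not_gt hs.1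

section

variable {E : Type*} [NormedAddCommGroup E] [NormedSpace ℝ E]

theorem ContinuousLinearMap.exists_apply_eq_one {ℓ : E →L[ℝ] ℝ} (hℓ : ℓ ≠ 0) : ∃ e, ℓ e = 1 := by
  obtain ⟨z, hz⟩ := DFunLike.ne_iff.1 hℓ
  exact ⟨(ℓ z)⁻¹ • z, by simp_all⟩

theorem ContinuousLinearMap.apply_self_le_of_nonpos_on_ker (B : E →L[ℝ] E →L[ℝ] ℝ)
    (ℓ : E →L[ℝ] ℝ) (hB : ∀ w, ℓ w = 0 → B w w ≤ 0) (v e : E) (he : ℓ e ≠ 0) :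
    B v v ≤ ℓ v / ℓ e * (B v e + B e v - ℓ v / ℓ e * B e e) := by
  set μ := ℓ v / ℓ e
  have hw : ℓ (v - μ • e) = 0 := by simp [μ, he]
  have := hB _ hw
  simp only [map_sub, map_smul, sub_apply, smul_apply, smul_eq_mul] at this
  linarith

theorem HasStrictFDerivAt.exists_zero_near {φ : E → ℝ} {φ' : E →L[ℝ] ℝ} {x₀ : E}
    (hφ : HasStrictFDerivAt φ φ' x₀) (hφ₀ : φ x₀ = 0) (hφ' : φ' ≠ 0) :
    ∃ κ ≥ 0, ∀ s ∈ 𝓝 x₀, ∀ᶠ x in 𝓝 x₀, 0 ≤ φ x → ∃ y ∈ s, φ y = 0 ∧ ‖x - y‖ ≤ κ * φ x := by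
  obtain ⟨e, he⟩ := ContinuousLinearMap.exists_apply_eq_one hφ'
  have he₀ : 0 < ‖e‖ := norm_pos_iff.2 fun h => by simp [h] at he
  refine ⟨2 * ‖e‖, by positivity, fun s hs => ?_⟩
  obtain ⟨t, ht, happrox⟩ := hφ.approximates_deriv_on_nhds (c := (2 * ‖e‖₊)⁻¹)
    (Or.inr (by simpa using he₀))
  obtain ⟨r, hr, hball⟩ := Metric.mem_nhds_iff.1 (inter_mem hs ht)
  have hsmall : ∀ᶠ x in 𝓝 x₀, 2 * ‖e‖ * φ x < r / 2 :=
    (continuousAt_const.mul hφ.continuousAt).eventually_lt continuousAt_const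
      (by simpa [hφ₀] using hr)
  filter_upwards [Metric.ball_mem_nhds x₀ (half_pos hr), hsmall] with x hx hxφ hxnn
  -- move from `x` against `e`, along which `φ` decreases at rate at least `1 / 2`
  have hpath : ∀ τ ∈ Icc 0 (2 * φ x), x - τ • e ∈ s ∩ t := fun τ hτ => hball <| by
    rw [Metric.mem_ball, dist_eq_norm, sub_right_comm]
    calc ‖x - x₀ - τ • e‖ ≤ ‖x - x₀‖ + ‖τ • e‖ := norm_sub_le _ _
      _ = dist x x₀ + τ * ‖e‖ := by rw [norm_smul, Real.norm_of_nonneg hτ.1, dist_eq_norm]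
      _ < r / 2 + r / 2 := add_lt_add_of_lt_of_le hx (by nlinarith [hτ.2])
      _ = r := add_halves r
  have hdecr : ∀ τ ∈ Icc 0 (2 * φ x), φ (x - τ • e) ≤ φ x - τ / 2 := by
    intro τ hτ
    have := happrox _ (hpath τ hτ).2 _ (hball (Metric.ball_subset_ball (half_le_self hr.le) hx)).2
    rw [sub_sub_cancel_left, map_neg, map_smul, he, norm_neg, norm_smul, Real.norm_of_nonneg hτ.1,
      NNReal.coe_inv, NNReal.coe_mul, NNReal.coe_ofNat, coe_nnnorm, smul_eq_mul, mul_one,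
      show (2 * ‖e‖)⁻¹ * (τ * ‖e‖) = τ / 2 by field_simp, Real.norm_eq_abs] at this
    linarith [(abs_le.1 this).2]
  have hcont : ContinuousOn (fun τ : ℝ => φ (x - τ • e)) (Icc 0 (2 * φ x)) :=
    happrox.continuousOn.comp (by fun_prop) fun τ hτ => (hpath τ hτ).2
  obtain ⟨τ, hτ, hτ0⟩ := intermediate_value_Icc' (by positivity) hcont
    (show (0 : ℝ) ∈ Icc _ _ from
      ⟨by linarith [hdecr _ (right_mem_Icc.2 (by positivity))], by simpa using hxnn⟩)
  refine ⟨x - τ • e, (hpath τ hτ).1, hτ0, ?_⟩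
  rw [sub_sub_cancel, norm_smul, Real.norm_of_nonneg hτ.1]
  nlinarith [hτ.2]

theorem exists_hessian_le_abs_fderiv_of_eq_zero {φ : E → ℝ} {x₀ : E} (hφ : ContDiffAt ℝ 2 φ x₀)
    (hreg : fderiv ℝ φ x₀ ≠ 0)
    (hconv : ∀ᶠ y in 𝓝 x₀, φ y = 0 → ∀ w, fderiv ℝ φ y w = 0 → fderiv ℝ (fderiv ℝ φ) y w w ≤ 0)
    (v : E) :
    ∃ A ≥ 0, ∀ᶠ y in 𝓝 x₀, φ y = 0 → fderiv ℝ (fderiv ℝ φ) y v v ≤ A * |fderiv ℝ φ y v| := by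
  obtain ⟨e, he⟩ := ContinuousLinearMap.exists_apply_eq_one hreg
  have hD1 : ContinuousAt (fderiv ℝ φ) x₀ := (hφ.fderiv_right (m := 1) (by norm_num)).continuousAt
  have hD2 : ContinuousAt (fderiv ℝ (fderiv ℝ φ)) x₀ :=
    ((hφ.fderiv_right (m := 1) (by norm_num)).fderiv_right (m := 0) (by norm_num)).continuousAt
  set Q : E → ℝ := fun y => fderiv ℝ (fderiv ℝ φ) y v e + fderiv ℝ (fderiv ℝ φ) y e v -
    fderiv ℝ φ y v / fderiv ℝ φ y e * fderiv ℝ (fderiv ℝ φ) y e e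
  have hDe : ContinuousAt (fun y => fderiv ℝ φ y e) x₀ := hD1.clm_apply continuousAt_const
  have hQ : ContinuousAt Q x₀ :=
    ContinuousAt.sub (by fun_prop)
      (((hD1.clm_apply continuousAt_const).div hDe (by simp [he])).mul (by fun_prop))
  refine ⟨2 * (|Q x₀| + 1), by positivity, ?_⟩
  filter_upwards [hconv, hQ.abs.eventually_lt continuousAt_const (lt_add_one |Q x₀|),
    continuousAt_const.eventually_lt hDe (show (1 / 2 : ℝ) < fderiv ℝ φ x₀ e by norm_num [he])]
    with y hy hQy hey hy0
  have hμ : |fderiv ℝ φ y v / fderiv ℝ φ y e| ≤ 2 * |fderiv ℝ φ y v| := by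
    rw [abs_div, abs_of_pos (a := fderiv ℝ φ y e) (by linarith), div_le_iff₀ (by linarith)]
    nlinarith [abs_nonneg (fderiv ℝ φ y v)]
  calc fderiv ℝ (fderiv ℝ φ) y v v ≤ fderiv ℝ φ y v / fderiv ℝ φ y e * Q y :=
        (fderiv ℝ (fderiv ℝ φ) y).apply_self_le_of_nonpos_on_ker _ (hy hy0) v e (by linarith)
    _ ≤ |fderiv ℝ φ y v / fderiv ℝ φ y e| * |Q y| := by rw [← abs_mul]; exact le_abs_self _
    _ ≤ 2 * |fderiv ℝ φ y v| * (|Q x₀| + 1) := by gcongr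
    _ = 2 * (|Q x₀| + 1) * |fderiv ℝ φ y v| := by ring

theorem exists_hessian_le_of_nonneg {φ : E → ℝ} {x₀ : E} (hφ : ContDiffAt ℝ 2 φ x₀)
    (hφ₀ : φ x₀ = 0) (hreg : fderiv ℝ φ x₀ ≠ 0)
    (hconv : ∀ᶠ y in 𝓝 x₀, φ y = 0 → ∀ w, fderiv ℝ φ y w = 0 → fderiv ℝ (fderiv ℝ φ) y w w ≤ 0)
    (v : E) (hlip : ∃ L, ∃ t ∈ 𝓝 x₀, LipschitzOnWith L (fun x => fderiv ℝ (fderiv ℝ φ) x v v) t) :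
    ∃ C, ∀ᶠ x in 𝓝 x₀, 0 ≤ φ x →
      fderiv ℝ (fderiv ℝ φ) x v v ≤ C * (φ x + |fderiv ℝ φ x v|) := by
  obtain ⟨A, hA, hlevel⟩ := exists_hessian_le_abs_fderiv_of_eq_zero hφ hreg hconv v
  obtain ⟨κ, hκ, hproj⟩ := (hφ.hasStrictFDerivAt two_ne_zero).exists_zero_near hφ₀ hreg
  obtain ⟨K₁, t₁, ht₁, hK₁⟩ := ((hφ.fderiv_right (m := 1) le_rfl).clm_apply
    (contDiffAt_const (c := v))).exists_lipschitzOnWith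
  obtain ⟨K₂, t₂, ht₂, hK₂⟩ := hlip
  refine ⟨A + (A * K₁ + K₂) * κ, ?_⟩
  filter_upwards [hproj _ (inter_mem hlevel (inter_mem ht₁ ht₂)), ht₁, ht₂]
    with x hx hx₁ hx₂ hxnn
  obtain ⟨y, ⟨hyA, hy₁, hy₂⟩, hy0, hxy⟩ := hx hxnn
  have hD1 : |fderiv ℝ φ y v| ≤ |fderiv ℝ φ x v| + K₁ * ‖x - y‖ := by
    have := hK₁.dist_le_mul y hy₁ x hx₁
    rw [Real.dist_eq, dist_comm, dist_eq_norm] at this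
    linarith [abs_sub_abs_le_abs_sub (fderiv ℝ φ y v) (fderiv ℝ φ x v)]
  have hD2 : fderiv ℝ (fderiv ℝ φ) x v v ≤ fderiv ℝ (fderiv ℝ φ) y v v + K₂ * ‖x - y‖ := by
    have := hK₂.dist_le_mul x hx₂ y hy₂
    rw [Real.dist_eq, dist_eq_norm] at this
    linarith [le_abs_self (fderiv ℝ (fderiv ℝ φ) x v v - fderiv ℝ (fderiv ℝ φ) y v v)]
  have hM : 0 ≤ A * K₁ + K₂ := by positivity
  calc fderiv ℝ (fderiv ℝ φ) x v v
      ≤ A * |fderiv ℝ φ x v| + (A * K₁ + K₂) * ‖x - y‖ := by nlinarith [hyA hy0]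
    _ ≤ A * |fderiv ℝ φ x v| + (A * K₁ + K₂) * κ * φ x := by
        rw [mul_assoc _ κ]; gcongr
    _ ≤ (A + (A * K₁ + K₂) * κ) * (φ x + |fderiv ℝ φ x v|) := by
        nlinarith [mul_nonneg (mul_nonneg hM hκ) (abs_nonneg (fderiv ℝ φ x v)), mul_nonneg hA hxnn]

theorem eventually_eq_zero_along_line_of_nonneg {φ : E → ℝ} {p v : E} {t₀ : ℝ}
    (hφ : ContDiffAt ℝ 2 φ (p + t₀ • v)) (hφ₀ : φ (p + t₀ • v) = 0)
    (hreg : fderiv ℝ φ (p + t₀ • v) ≠ 0)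
    (hconv : ∀ᶠ y in 𝓝 (p + t₀ • v), φ y = 0 → ∀ w, fderiv ℝ φ y w = 0 →
      fderiv ℝ (fderiv ℝ φ) y w w ≤ 0)
    (hlip : ∃ L, ∃ t ∈ 𝓝 (p + t₀ • v),
      LipschitzOnWith L (fun x => fderiv ℝ (fderiv ℝ φ) x v v) t)
    (hnn : ∀ᶠ t in 𝓝 t₀, 0 ≤ φ (p + t • v)) :
    ∀ᶠ t in 𝓝[≥] t₀, φ (p + t • v) = 0 := by
  have hline : ∀ t : ℝ, HasDerivAt (fun t : ℝ => p + t • v) v t := fun t => by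
    simpa using ((hasDerivAt_id t).smul_const v).const_add p
  have hγ : Tendsto (fun t : ℝ => p + t • v) (𝓝 t₀) (𝓝 (p + t₀ • v)) :=
    (hline t₀).continuousAt
  obtain ⟨C, hC⟩ := exists_hessian_le_of_nonneg hφ hφ₀ hreg hconv v hlip
  have hderiv : ∀ᶠ t in 𝓝 t₀,
      HasDerivAt (fun t => φ (p + t • v)) (fderiv ℝ φ (p + t • v) v) t ∧
      HasDerivAt (fun t => fderiv ℝ φ (p + t • v) v)
        (fderiv ℝ (fderiv ℝ φ) (p + t • v) v v) t := by
    filter_upwards [hγ.eventually (hφ.eventually (by simp))] with t ht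
    have h1 : DifferentiableAt ℝ φ (p + t • v) := ht.differentiableAt two_ne_zero
    have h2 : DifferentiableAt ℝ (fderiv ℝ φ) (p + t • v) :=
      (ht.fderiv_right (m := 1) (by norm_num)).differentiableAt one_ne_zero
    refine ⟨h1.hasFDerivAt.comp_hasDerivAt t (hline t), ?_⟩
    have h3 := h2.hasFDerivAt.comp_hasDerivAt t (hline t)
    simpa using h3.clm_apply (hasDerivAt_const t v)
  have hmin : IsLocalMin (fun t => φ (p + t • v)) t₀ := by
    show ∀ᶠ t in 𝓝 t₀, φ (p + t₀ • v) ≤ φ (p + t • v)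
    rwa [hφ₀]
  refine eventually_eq_zero_of_second_deriv_le (C := C)
    ((hderiv.mono fun t ht => ht.1).filter_mono nhdsWithin_le_nhds)
    ((hderiv.mono fun t ht => ht.2).filter_mono nhdsWithin_le_nhds)
    (hnn.filter_mono nhdsWithin_le_nhds) hφ₀ (hmin.hasDerivAt_eq_zero hderiv.self_of_nhds.1) ?_
  filter_upwards [nhdsWithin_le_nhds (hγ.eventually hC), nhdsWithin_le_nhds hnn]
    with t h1 h2 using h1 h2

theorem LipschitzOnWith.fderiv_fderiv_apply {F : Type*} [NormedAddCommGroup F]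
    [NormedSpace ℝ F] {φ : E → F} {L : NNReal} {t : Set E}
    (h : LipschitzOnWith L (fun x => iteratedFDeriv ℝ 2 φ x) t) (v w : E) :
    LipschitzOnWith (‖ContinuousMultilinearMap.apply ℝ (fun _ : Fin 2 => E) F ![v, w]‖₊ * L)
      (fun x => fderiv ℝ (fderiv ℝ φ) x v w) t := by
  simpa [Function.comp_def, iteratedFDeriv_two_apply] using
    (ContinuousMultilinearMap.apply ℝ (fun _ : Fin 2 => E) F ![v, w]).lipschitz
      |>.comp_lipschitzOnWith h

end

theorem stmt_5_general (m : ℕ) (UT : Set (EuclideanSpace ℝ (Fin m)))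
    (hUT : IsOpen UT)
    (φ : EuclideanSpace ℝ (Fin m) → ℝ) (hφ : ContDiffOn ℝ 2 φ UT)
    (hφlip : LocallyLipschitzOn UT (fun x => iteratedFDeriv ℝ 2 φ x))
    (hreg : ∀ p ∈ UT, φ p = 0 → fderiv ℝ φ p ≠ 0)
    (hconv : ∀ p ∈ UT, φ p = 0 → ∀ v : EuclideanSpace ℝ (Fin m),
      fderiv ℝ φ p v = 0 → iteratedFDeriv ℝ 2 φ p ![v, v] ≤ 0)
    (p q : EuclideanSpace ℝ (Fin m))
    (hp : p ∈ {x ∈ UT | 0 < φ x}) (hq : q ∈ {x ∈ UT | 0 < φ x})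
    (hseg : segment ℝ p q ⊆ {x ∈ UT | 0 < φ x} ∪ {x ∈ UT | φ x = 0}) :
    segment ℝ p q ⊆ {x ∈ UT | 0 < φ x} := by
  rw [segment_eq_image'] at hseg ⊢
  have hline : ∀ t ∈ Icc (0 : ℝ) 1, p + t • (q - p) ∈ UT ∧ 0 ≤ φ (p + t • (q - p)) := by
    intro t ht
    rcases hseg (mem_image_of_mem _ ht) with h | h
    exacts [⟨h.1, h.2.le⟩, ⟨h.1, h.2.ge⟩]
  have hne : ∀ t ∈ Icc (0 : ℝ) 1, φ (p + t • (q - p)) ≠ 0 := by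
    refine ne_zero_of_frequently_eq_zero_nhdsGT
      (hφ.continuousOn.comp (by fun_prop) fun t ht => (hline t ht).1)
      (by simpa using hp.2.ne') (by simpa using hq.2.ne') fun t₀ ht₀ h₀ => ?_
    have hx₀ := (hline t₀ (Ioo_subset_Icc_self ht₀)).1
    obtain ⟨L, t, ht, hL⟩ := hφlip hx₀
    refine ((eventually_eq_zero_along_line_of_nonneg (hφ.contDiffAt (hUT.mem_nhds hx₀)) h₀
      (hreg _ hx₀ h₀) ?_ ?_ ?_).filter_mono (nhdsWithin_mono _ Ioi_subset_Ici_self)).frequently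
    · filter_upwards [hUT.mem_nhds hx₀] with y hy hy₀ w hw
      simpa [iteratedFDeriv_two_apply] using hconv y hy hy₀ w hw
    · exact ⟨_, t, hUT.nhdsWithin_eq hx₀ ▸ ht, hL.fderiv_fderiv_apply _ _⟩
    · filter_upwards [Icc_mem_nhds ht₀.1 ht₀.2] with t ht using (hline t ht).2
  rintro _ ⟨t, ht, rfl⟩
  exact ⟨(hline t ht).1, (hline t ht).2.lt_of_ne' (hne t ht)⟩

/-- **Flat instance of geometric convexity**: if `Ũ` is open and convex,
`0` is a regular value of the `C²` function `φ` (with locally Lipschitz second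
derivative), `H = φ⁻¹(0)`, `Ω = {φ > 0}`, and `H` is infinitesimally convex
(`D²φ_p(v,v) ≤ 0` whenever `p ∈ H`, `dφ_p(v) = 0`), then any straight segment
with endpoints in `Ω` contained in `Ω ∪ H` is in fact contained in `Ω`. -/
theorem stmt_5 (m : ℕ) (UT : Set (EuclideanSpace ℝ (Fin m)))
    (hUT : IsOpen UT) (hUTconv : Convex ℝ UT)
    (φ : EuclideanSpace ℝ (Fin m) → ℝ) (hφ : ContDiffOn ℝ 2 φ UT)
    (hφlip : LocallyLipschitzOn UT (fun x => iteratedFDeriv ℝ 2 φ x))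
    (hreg : ∀ p ∈ UT, φ p = 0 → fderiv ℝ φ p ≠ 0)
    (hconv : ∀ p ∈ UT, φ p = 0 → ∀ v : EuclideanSpace ℝ (Fin m),
      fderiv ℝ φ p v = 0 → iteratedFDeriv ℝ 2 φ p ![v, v] ≤ 0)
    (p q : EuclideanSpace ℝ (Fin m))
    (hp : p ∈ {x ∈ UT | 0 < φ x}) (hq : q ∈ {x ∈ UT | 0 < φ x})
    (hseg : segment ℝ p q ⊆ {x ∈ UT | 0 < φ x} ∪ {x ∈ UT | φ x = 0}) :
    segment ℝ p q ⊆ {x ∈ UT | 0 < φ x} :=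
  stmt_5_general m UT hUT φ hφ hφlip hreg hconv p q hp hq hseg
end

section
/- Let m ≥ 2 and let q be the Minkowski quadratic form on ℝ^m, q(x) = −x₁² + x₂² + ⋯ + x_m². Let W ⊆ ℝ^m be a linear subspace with dim W ≥ 2. Then every nonzero w ∈ W with q(w) = 0 lies in the closure of the set {v ∈ W : q(v) > 0}. -/
/-!
Choose `v ∈ W` nonzero with vanishing time coordinate (possible as `dim W ≥ 2`); it is spacelike.
By the parallelogram law `q (w + t • v) + q (w - t • v) = 2 q w + 2 t² q v > 0` for `t ≠ 0`,
so one of `w ± t • v` is a spacelike vector of `W`, and these tend to `w` as `t → 0`.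
-/

open Filter Topology Module

theorem QuadraticMap.map_add_add_map_sub {R M N : Type*} [CommRing R] [AddCommGroup M]
    [Module R M] [AddCommGroup N] [Module R N] (Q : QuadraticMap R M N) (x y : M) :
    Q (x + y) + Q (x - y) = 2 • Q x + 2 • Q y := by
  rw [sub_eq_add_neg, QuadraticMap.map_add Q x y, QuadraticMap.map_add Q x (-y), polar_neg_right,
    QuadraticMap.map_neg]
  abel

theorem QuadraticMap.weightedSumSquares_pos {ι : Type*} [Fintype ι] {wt : ι → ℝ} {x : ι → ℝ}
    (hx : x ≠ 0) (hwt : ∀ i, x i ≠ 0 → 0 < wt i) : 0 < weightedSumSquares ℝ wt x := by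
  obtain ⟨j, hj⟩ := Function.ne_iff.mp hx
  rw [weightedSumSquares_apply]
  refine Finset.sum_pos' (fun i _ => ?_) ⟨j, Finset.mem_univ j, ?_⟩
  · by_cases hi : x i = 0
    · simp [hi]
    · exact smul_nonneg (hwt i hi).le (mul_self_nonneg _)
  · exact smul_pos (hwt j hj) (mul_self_pos.mpr hj)

theorem Submodule.exists_ne_zero_mem_ker_of_one_lt_finrank {K V : Type*} [Field K]
    [AddCommGroup V] [Module K V] {W : Submodule K V} [FiniteDimensional K W]
    (hW : 1 < finrank K W) (f : V →ₗ[K] K) : ∃ v ∈ W, v ≠ 0 ∧ f v = 0 := by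
  have hker : LinearMap.ker (f ∘ₗ W.subtype) ≠ ⊥ :=
    LinearMap.ker_ne_bot_of_finrank_lt (by rwa [finrank_self])
  obtain ⟨v, hv, hv0⟩ := Submodule.exists_mem_ne_zero_of_ne_bot hker
  exact ⟨v, v.2, by simpa using hv0, hv⟩

theorem QuadraticForm.mem_closure_setOf_pos {E : Type*} [AddCommGroup E] [Module ℝ E]
    [TopologicalSpace E] [ContinuousAdd E] [ContinuousSMul ℝ E] (Q : QuadraticForm ℝ E)
    (W : Submodule ℝ E) {w v : E} (hw : w ∈ W) (hv : v ∈ W) (hQw : 0 ≤ Q w) (hQv : 0 < Q v) :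
    w ∈ closure {x | x ∈ W ∧ 0 < Q x} := by
  set S := {x | x ∈ W ∧ 0 < Q x}
  have hmem : ∀ t : ℝ, w + t • v ∈ W := fun t => W.add_mem hw (W.smul_mem t hv)
  have hsign : ∀ t : ℝ, t ≠ 0 → w + t • v ∈ S ∨ w + (-t) • v ∈ S := by
    intro t ht
    have hsum : Q (w + t • v) + Q (w + (-t) • v) = 2 * Q w + 2 * (t * t) * Q v := by
      rw [neg_smul, ← sub_eq_add_neg, Q.map_add_add_map_sub, Q.map_smul]
      simp only [nsmul_eq_mul, smul_eq_mul]
      push_cast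
      ring
    have : 0 < 2 * Q w + 2 * (t * t) * Q v := by
      have := mul_self_pos.mpr ht
      positivity
    rcases lt_or_ge 0 (Q (w + t • v)) with h | h
    · exact Or.inl ⟨hmem t, h⟩
    · exact Or.inr ⟨hmem (-t), by linarith⟩
  have hlim : ∀ c : ℝ, Tendsto (fun t : ℝ => w + (c * t) • v) (𝓝[≠] 0) (𝓝 w) := by
    intro c
    have : Continuous fun t : ℝ => w + (c * t) • v := by fun_prop
    simpa using (this.tendsto 0).mono_left nhdsWithin_le_nhds
  have hfreq : ∃ᶠ t in 𝓝[≠] (0 : ℝ), w + (1 * t) • v ∈ S ∨ w + (-1 * t) • v ∈ S :=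
    (eventually_nhdsWithin_of_forall fun t ht => by simpa using hsign t ht).frequently
  rw [mem_closure_iff_frequently]
  rcases frequently_or_distrib.mp hfreq with h | h
  · exact (hlim 1).frequently h
  · exact (hlim (-1)).frequently h

noncomputable def minkowskiForm (m : ℕ) : QuadraticForm ℝ (Fin m → ℝ) :=
  QuadraticMap.weightedSumSquares ℝ fun i : Fin m => if i.val = 0 then (-1 : ℝ) else 1

theorem minkowskiForm_apply {m : ℕ} (x : Fin m → ℝ) :
    minkowskiForm m x = ∑ i : Fin m, (if i.val = 0 then (-1 : ℝ) else 1) * x i ^ 2 := by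
  simp [minkowskiForm, sq]

theorem minkowskiForm_pos {m : ℕ} [NeZero m] {x : Fin m → ℝ} (hx : x ≠ 0) (hx0 : x 0 = 0) :
    0 < minkowskiForm m x := by
  refine QuadraticMap.weightedSumSquares_pos hx fun i hi => ?_
  have : i.val ≠ 0 := fun h => hi (by rwa [show i = 0 from Fin.ext (by simpa using h)])
  simp [this]

theorem stmt_7_general (m : ℕ) (hm : 2 ≤ m)
    (q : (Fin m → ℝ) → ℝ)
    (hq : ∀ x, q x = ∑ i : Fin m, (if i.val = 0 then (-1 : ℝ) else 1) * x i ^ 2)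
    (W : Submodule ℝ (Fin m → ℝ)) (hW : 2 ≤ Module.finrank ℝ W)
    (w : Fin m → ℝ) (hw : w ∈ W) (hwn : q w = 0) :
    w ∈ closure {v : Fin m → ℝ | v ∈ W ∧ 0 < q v} := by
  have : NeZero m := ⟨by omega⟩
  obtain rfl : q = minkowskiForm m := funext fun x => (hq x).trans (minkowskiForm_apply x).symm
  obtain ⟨v, hvW, hv0, hvt⟩ :=
    Submodule.exists_ne_zero_mem_ker_of_one_lt_finrank hW (LinearMap.proj (R := ℝ) 0)
  exact (minkowskiForm m).mem_closure_setOf_pos W hw hvW hwn.ge (minkowskiForm_pos hv0 hvt)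

/-- **Remark 4.1 (spacelike case)**: in Minkowski space `(ℝ^m, q)`,
`q(x) = −x₁² + x₂² + ⋯ + x_m²`, if `W` is a linear subspace of dimension at
least `2`, then every nonzero null vector of `W` is in the closure of the
spacelike vectors of `W`. -/
theorem stmt_7 (m : ℕ) (hm : 2 ≤ m)
    (q : (Fin m → ℝ) → ℝ)
    (hq : ∀ x, q x = ∑ i : Fin m, (if i.val = 0 then (-1 : ℝ) else 1) * x i ^ 2)
    (W : Submodule ℝ (Fin m → ℝ)) (hW : 2 ≤ Module.finrank ℝ W)
    (w : Fin m → ℝ) (hw : w ∈ W) (hw0 : w ≠ 0) (hwn : q w = 0) :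
    w ∈ closure {v : Fin m → ℝ | v ∈ W ∧ 0 < q v} :=
  stmt_7_general m hm q hq W hW w hw hwn
end
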